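/- arXiv:math/0110324 — 6 statements merged into one kernel-verified Lean document; each statement's English description precedes it below -/
import Mathlib

section
/- Over any field K of characteristic 0, the K-algebras K[x,y,z,u]/⟨xy - z² + 1⟩ and K[x,y,z,v]/⟨x²y - z² + 1⟩ are isomorphic as K-algebras. An explicit isomorphism is induced by φ: x ↦ x, y ↦ xv² + 2zv + xy, z ↦ xv + z, u ↦ xv³ + 3zv² + 3xyv + yz. -/
/-!
The two rings are cylinders over the Danielewski surfaces `xy = z² - 1` and `x²y = z² - 1`.
Writing `Y, Z, U` for the images of `y, z, u`, one computes `ZY - xU = 2v(z² - x²y) = 2v`,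
so `v` is recovered as `w = (zy - xu)/2`; then `z = Z - xw`, and in the first ring
`y - 2zw + xw² = x(zu - y² + w²)`, which gives the inverse
`x ↦ x, y ↦ zu - y² + w², z ↦ z - xw, v ↦ w`.
Both composites fix the generators modulo the defining relations.
-/

open MvPolynomial

namespace DanielewskiCylinder

variable {R : Type*} [CommRing R]

noncomputable def liftOfAevalEqZero {σ S : Type*} [CommRing S] [Algebra R S]
    {f : MvPolynomial σ R} (v : σ → S) (hv : aeval v f = 0) :
    MvPolynomial σ R ⧸ Ideal.span {f} →ₐ[R] S :=
  Ideal.Quotient.liftₐ _ (aeval v) fun a ha => by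
    obtain ⟨c, rfl⟩ := Ideal.mem_span_singleton'.mp ha
    rw [map_mul, hv, mul_zero]

@[simp]
lemma liftOfAevalEqZero_mk {σ S : Type*} [CommRing S] [Algebra R S]
    {f : MvPolynomial σ R} (v : σ → S) (hv : aeval v f = 0) (p : MvPolynomial σ R) :
    liftOfAevalEqZero v hv (Ideal.Quotient.mk _ p) = aeval v p :=
  rfl

variable (R) in
abbrev Cyl₁ : Type _ :=
  MvPolynomial (Fin 4) R ⧸ Ideal.span {(X 0 * X 1 - X 2 ^ 2 + 1 : MvPolynomial (Fin 4) R)}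

variable (R) in
abbrev Cyl₂ : Type _ :=
  MvPolynomial (Fin 4) R ⧸ Ideal.span {(X 0 ^ 2 * X 1 - X 2 ^ 2 + 1 : MvPolynomial (Fin 4) R)}

-- In `Cyl₂` the fourth generator `u` plays the role of the paper's `v`.
local notation "x" => Ideal.Quotient.mk _ (X 0)
local notation "y" => Ideal.Quotient.mk _ (X 1)
local notation "z" => Ideal.Quotient.mk _ (X 2)
local notation "u" => Ideal.Quotient.mk _ (X 3)

lemma cyl₁_relation : (x * y - z ^ 2 + 1 : Cyl₁ R) = 0 := by
  rw [← map_mul, ← map_pow, ← map_sub, ← map_one (Ideal.Quotient.mk _), ← map_add]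
  exact Ideal.Quotient.mk_singleton_self _

lemma cyl₂_relation : (x ^ 2 * y - z ^ 2 + 1 : Cyl₂ R) = 0 := by
  rw [← map_pow, ← map_mul, ← map_pow, ← map_sub, ← map_one (Ideal.Quotient.mk _), ← map_add]
  exact Ideal.Quotient.mk_singleton_self _

noncomputable def toCyl₂ : Cyl₁ R →ₐ[R] Cyl₂ R :=
  liftOfAevalEqZero ![x, x * u ^ 2 + 2 * z * u + x * y, x * u + z,
      x * u ^ 3 + 3 * z * u ^ 2 + 3 * x * y * u + y * z] <| by
    simp only [Fin.isValue, map_add, map_sub, map_mul, map_pow, map_one, aeval_X,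
      Matrix.cons_val_zero, Matrix.cons_val_one, Matrix.cons_val]
    linear_combination cyl₂_relation (R := R)

variable [Invertible (2 : R)]

noncomputable def preimageV : Cyl₁ R := algebraMap R _ ⅟2 * (z * y - x * u)

lemma two_mul_preimageV : 2 * (preimageV : Cyl₁ R) = z * y - x * u := by
  rw [preimageV, ← mul_assoc, ← map_ofNat (algebraMap R (Cyl₁ R)) 2, ← map_mul, mul_invOf_self,
    map_one, one_mul]

noncomputable def toCyl₁ : Cyl₂ R →ₐ[R] Cyl₁ R :=
  liftOfAevalEqZero ![x, z * u - y ^ 2 + preimageV ^ 2, z - x * preimageV, preimageV] <| by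
    simp only [Fin.isValue, map_add, map_sub, map_mul, map_pow, map_one, aeval_X,
      Matrix.cons_val_zero, Matrix.cons_val_one, Matrix.cons_val]
    linear_combination x * z * two_mul_preimageV (R := R) + (1 - x * y) * cyl₁_relation (R := R)

lemma toCyl₁_comp_toCyl₂ : toCyl₁.comp toCyl₂ = AlgHom.id R (Cyl₁ R) := by
  refine Ideal.Quotient.algHom_ext _ (MvPolynomial.algHom_ext fun i => ?_)
  fin_cases i <;>
    simp only [Fin.isValue, Fin.zero_eta, Fin.mk_one, Fin.reduceFinMk, toCyl₁, toCyl₂,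
      AlgHom.coe_comp, AlgHom.id_comp, Ideal.Quotient.mkₐ_eq_mk, Function.comp_apply,
      liftOfAevalEqZero_mk, aeval_X, Matrix.cons_val_zero, Matrix.cons_val_one, Matrix.cons_val,
      map_add, map_mul, map_pow, map_ofNat, add_sub_cancel]
  · linear_combination z * two_mul_preimageV (R := R) - y * cyl₁_relation (R := R)
  · linear_combination (2 * z * preimageV + y) * two_mul_preimageV (R := R)
      - (2 * y * preimageV + u) * cyl₁_relation (R := R)

lemma toCyl₂_preimageV : toCyl₂ (preimageV : Cyl₁ R) = u := by
  have h : (2 : Cyl₂ R) * algebraMap R _ ⅟2 = 1 := by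
    rw [← map_ofNat (algebraMap R (Cyl₂ R)) 2, ← map_mul, mul_invOf_self, map_one]
  simp only [toCyl₂, Fin.isValue, preimageV, map_mul, AlgHom.commutes, map_sub,
    liftOfAevalEqZero_mk, aeval_X, Matrix.cons_val, Matrix.cons_val_one, Matrix.cons_val_zero]
  linear_combination u * h - 2 * algebraMap R (Cyl₂ R) ⅟2 * u * cyl₂_relation (R := R)

lemma toCyl₂_comp_toCyl₁ : toCyl₂.comp toCyl₁ = AlgHom.id R (Cyl₂ R) := by
  refine Ideal.Quotient.algHom_ext _ (MvPolynomial.algHom_ext fun i => ?_)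
  fin_cases i <;>
    simp only [Fin.isValue, Fin.zero_eta, Fin.mk_one, Fin.reduceFinMk, toCyl₁, toCyl₂_preimageV,
      AlgHom.coe_comp, AlgHom.id_comp, Ideal.Quotient.mkₐ_eq_mk, Function.comp_apply,
      liftOfAevalEqZero_mk, aeval_X, Matrix.cons_val_zero, Matrix.cons_val_one, Matrix.cons_val,
      map_add, map_sub, map_mul, map_pow] <;>
    simp only [toCyl₂, Fin.isValue, liftOfAevalEqZero_mk, aeval_X, Matrix.cons_val_zero,
      Matrix.cons_val_one, Matrix.cons_val, add_sub_cancel_left]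
  linear_combination (u ^ 2 - y) * cyl₂_relation (R := R)

noncomputable def cylEquiv : Cyl₁ R ≃ₐ[R] Cyl₂ R :=
  AlgEquiv.ofAlgHom toCyl₂ toCyl₁ toCyl₂_comp_toCyl₁ toCyl₁_comp_toCyl₂

end DanielewskiCylinder

open DanielewskiCylinder in
/-- over a field `K` of characteristic 0, the algebras
`K[x,y,z,u]/⟨xy - z² + 1⟩` and `K[x,y,z,v]/⟨x²y - z² + 1⟩` are isomorphic, via the
explicit map `x ↦ x, y ↦ xv² + 2zv + xy, z ↦ xv + z, u ↦ xv³ + 3zv² + 3xyv + yz`.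
Variables: `X 0 = x`, `X 1 = y`, `X 2 = z`, `X 3 = u` (resp. `v`). -/
theorem stmt6 {K : Type*} [Field K] [CharZero K] :
    ∃ e : (MvPolynomial (Fin 4) K ⧸
            Ideal.span {(X 0 * X 1 - X 2 ^ 2 + 1 : MvPolynomial (Fin 4) K)}) ≃ₐ[K]
          (MvPolynomial (Fin 4) K ⧸
            Ideal.span {(X 0 ^ 2 * X 1 - X 2 ^ 2 + 1 : MvPolynomial (Fin 4) K)}),
      e (Ideal.Quotient.mk _ (X 0)) = Ideal.Quotient.mk _ (X 0) ∧
      e (Ideal.Quotient.mk _ (X 1))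
        = Ideal.Quotient.mk _ (X 0 * X 3 ^ 2 + 2 * X 2 * X 3 + X 0 * X 1) ∧
      e (Ideal.Quotient.mk _ (X 2)) = Ideal.Quotient.mk _ (X 0 * X 3 + X 2) ∧
      e (Ideal.Quotient.mk _ (X 3))
        = Ideal.Quotient.mk _
            (X 0 * X 3 ^ 3 + 3 * X 2 * X 3 ^ 2 + 3 * X 0 * X 1 * X 3 + X 1 * X 2) := by
  have : Invertible (2 : K) := invertibleOfNonzero two_ne_zero
  refine ⟨cylEquiv, ?_, ?_, ?_, ?_⟩ <;> simp [cylEquiv, toCyl₂, map_ofNat]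
end

section
/- With φ the map x₁ ↦ x₂, y₁ ↦ x₂v² + 2z₂v + x₂y₂, z₁ ↦ x₂v + z₂, u ↦ x₂v³ + 3z₂v² + 3x₂y₂v + y₂z₂ from K[x₁,y₁,z₁,u] to K[x₂,y₂,z₂,v]/⟨x₂²y₂ - z₂² + 1⟩ (K of characteristic 0), one has φ(y₁z₁) - x₂·φ(u) ≡ 2v modulo ⟨x₂²y₂ - z₂² + 1⟩; consequently φ is surjective onto K[x₂,y₂,z₂,v]/⟨x₂²y₂ - z₂² + 1⟩. -/
set_option maxHeartbeats 1000000


open MvPolynomial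

/-- for the map `φ` of Russell's isomorphism
(`x₁ ↦ x₂, y₁ ↦ x₂v² + 2z₂v + x₂y₂, z₁ ↦ x₂v + z₂, u ↦ x₂v³ + 3z₂v² + 3x₂y₂v + y₂z₂`
into `K[x₂,y₂,z₂,v]/⟨x₂²y₂ - z₂² + 1⟩`), one has `φ(y₁z₁) - x₂·φ(u) = 2v` in the
quotient, and `φ` is surjective. Variables: `X 0 = x`, `X 1 = y`, `X 2 = z`,
`X 3 = u` (resp. `v`). -/
theorem stmt8 {K : Type*} [Field K] [CharZero K]
    (g : Fin 4 → MvPolynomial (Fin 4) K ⧸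
        Ideal.span {(X 0 ^ 2 * X 1 - X 2 ^ 2 + 1 : MvPolynomial (Fin 4) K)})
    (hg : g = ![Ideal.Quotient.mk _ (X 0),
      Ideal.Quotient.mk _ (X 0 * X 3 ^ 2 + 2 * X 2 * X 3 + X 0 * X 1),
      Ideal.Quotient.mk _ (X 0 * X 3 + X 2),
      Ideal.Quotient.mk _
        (X 0 * X 3 ^ 3 + 3 * X 2 * X 3 ^ 2 + 3 * X 0 * X 1 * X 3 + X 1 * X 2)]) :
    aeval g (X 1 * X 2 : MvPolynomial (Fin 4) K)
        - Ideal.Quotient.mk _ (X 0) * aeval g (X 3 : MvPolynomial (Fin 4) K)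
      = Ideal.Quotient.mk _ (2 * X 3) ∧
    Function.Surjective (aeval (R := K) g) := by
  let f : MvPolynomial (Fin 4) K := X 0 ^ 2 * X 1 - X 2 ^ 2 + 1
  let I : Ideal (MvPolynomial (Fin 4) K) := Ideal.span {f}
  let mk : MvPolynomial (Fin 4) K →+* MvPolynomial (Fin 4) K ⧸ I := Ideal.Quotient.mk I
  have e0 : aeval g (X 0 : MvPolynomial (Fin 4) K) = mk (X 0) := by
    rw [aeval_X, hg]; rfl
  have e1 : aeval g (X 1 : MvPolynomial (Fin 4) K)
      = mk (X 0 * X 3 ^ 2 + 2 * X 2 * X 3 + X 0 * X 1) := by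
    rw [aeval_X, hg]; rfl
  have e2 : aeval g (X 2 : MvPolynomial (Fin 4) K) = mk (X 0 * X 3 + X 2) := by
    rw [aeval_X, hg]; rfl
  have e3 : aeval g (X 3 : MvPolynomial (Fin 4) K)
      = mk (X 0 * X 3 ^ 3 + 3 * X 2 * X 3 ^ 2 + 3 * X 0 * X 1 * X 3 + X 1 * X 2) := by
    rw [aeval_X, hg]; rfl
  have key : aeval g (X 1 * X 2 : MvPolynomial (Fin 4) K)
        - mk (X 0) * aeval g (X 3 : MvPolynomial (Fin 4) K) = mk (2 * X 3) := by
    rw [map_mul, e1, e2, e3, ← map_mul, ← map_mul, ← map_sub, Ideal.Quotient.eq]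
    exact Ideal.mem_span_singleton.mpr ⟨-(2 * X 3), by show _ = f * _; unfold f; ring⟩
  refine ⟨key, ?_⟩
  set S : Subalgebra K _ := (aeval (R := K) g).range with hS
  have hx : mk (X 0) ∈ S := ⟨X 0, e0⟩
  have h2v : mk (2 * X 3) ∈ S := by
    rw [← key]
    exact sub_mem ⟨X 1 * X 2, rfl⟩ (mul_mem ⟨X 0, e0⟩ ⟨X 3, rfl⟩)
  have hv : mk (X 3) ∈ S := by
    have e : ((2 : K)⁻¹) • (2 * X 3 : MvPolynomial (Fin 4) K) = X 3 := by
      rw [two_mul, smul_add, ← add_smul]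
      norm_num
    have h : ((2 : K)⁻¹) • mk (2 * X 3) = mk (X 3) := by
      show ((2 : K)⁻¹) • Ideal.Quotient.mkₐ K I (2 * X 3) = Ideal.Quotient.mkₐ K I (X 3)
      rw [← map_smul, e]
    rw [← h]
    exact S.smul_mem h2v _
  have hz : mk (X 2) ∈ S := by
    have e : mk (X 2) = aeval g (X 2 : MvPolynomial (Fin 4) K) - mk (X 0) * mk (X 3) := by
      rw [e2, ← map_mul, ← map_sub]
      congr 1
      ring
    rw [e]
    exact sub_mem ⟨X 2, rfl⟩ (mul_mem hx hv)
  have hxy : mk (X 0 * X 1) ∈ S := by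
    have e : mk (X 0 * X 1) = aeval g (X 1 : MvPolynomial (Fin 4) K)
          - mk (X 0) * mk (X 3) ^ 2 - mk (2 * X 2) * mk (X 3) := by
      rw [e1, ← map_pow, ← map_mul, ← map_mul, ← map_sub, ← map_sub]
      congr 1
      ring
    have h2z : mk (2 * X 2) ∈ S := by
      rw [show (2 * X 2 : MvPolynomial (Fin 4) K) = X 2 + X 2 by ring, map_add]
      exact add_mem hz hz
    rw [e]
    exact sub_mem (sub_mem ⟨X 1, rfl⟩ (mul_mem hx (pow_mem hv 2))) (mul_mem h2z hv)
  have hyz : mk (X 1 * X 2) ∈ S := by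
    have e : mk (X 1 * X 2) = aeval g (X 3 : MvPolynomial (Fin 4) K)
          - mk (X 0) * mk (X 3) ^ 3 - mk (3 * X 2) * mk (X 3) ^ 2
          - mk (3 * (X 0 * X 1)) * mk (X 3) := by
      rw [e3, ← map_pow, ← map_pow, ← map_mul, ← map_mul, ← map_mul, ← map_sub,
        ← map_sub, ← map_sub]
      congr 1
      ring
    have h3z : mk (3 * X 2) ∈ S := by
      rw [show (3 * X 2 : MvPolynomial (Fin 4) K) = X 2 + X 2 + X 2 by ring, map_add, map_add]
      exact add_mem (add_mem hz hz) hz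
    have h3xy : mk (3 * (X 0 * X 1)) ∈ S := by
      rw [show (3 * (X 0 * X 1) : MvPolynomial (Fin 4) K)
          = X 0 * X 1 + X 0 * X 1 + X 0 * X 1 by ring, map_add, map_add]
      exact add_mem (add_mem hxy hxy) hxy
    rw [e]
    exact sub_mem (sub_mem (sub_mem ⟨X 3, rfl⟩ (mul_mem hx (pow_mem hv 3)))
      (mul_mem h3z (pow_mem hv 2))) (mul_mem h3xy hv)
  have hy : mk (X 1) ∈ S := by
    have e : mk (X 1) = mk (X 1 * X 2) * mk (X 2) - mk (X 0 * X 1) ^ 2 := by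
      rw [← map_mul, ← map_pow, ← map_sub, Ideal.Quotient.eq]
      exact Ideal.mem_span_singleton.mpr ⟨X 1, by show _ = f * _; unfold f; ring⟩
    rw [e]
    exact sub_mem (mul_mem hyz hz) (pow_mem hxy 2)
  have hall : ∀ i : Fin 4, mk (X i) ∈ S := by
    intro i
    fin_cases i <;> assumption
  intro a
  obtain ⟨p, rfl⟩ := Ideal.Quotient.mk_surjective a
  show mk p ∈ S
  induction p using MvPolynomial.induction_on with
  | C c =>
      exact ⟨C c, by
        show aeval g (C c) = mk (C c)
        rw [aeval_C, ← MvPolynomial.algebraMap_eq]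
        exact ((Ideal.Quotient.mkₐ K I).commutes c).symm⟩
  | add p q hp hq => rw [map_add]; exact add_mem hp hq
  | mul_X p i hp => rw [map_mul]; exact mul_mem hp (hall i)
end

section
/- The ℂ-algebras ℂ[x,y,z]/⟨x(1+xy+z²) - 1⟩ and ℂ[x,y,z]/⟨xy - 1⟩ are isomorphic. Hence the hypersurface {x(1+xy+z²)=1} in ℂ³ is isomorphic to {xy=1} in ℂ³. -/
open MvPolynomial

open MvPolynomial

noncomputable section

abbrev R3 := MvPolynomial (Fin 3) ℂ

def fpoly : R3 := X 0 * (1 + X 0 * X 1 + X 2 ^ 2) - 1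
def gpoly : R3 := X 0 * X 1 - 1

abbrev A := R3 ⧸ Ideal.span {fpoly}
abbrev B := R3 ⧸ Ideal.span {gpoly}

def homAB : R3 →ₐ[ℂ] B :=
  (Ideal.Quotient.mkₐ ℂ (Ideal.span {gpoly})).comp
    (aeval ![X 0, X 1 ^ 2 - X 1 - X 1 * X 2 ^ 2, X 2])

def homBA : R3 →ₐ[ℂ] A :=
  (Ideal.Quotient.mkₐ ℂ (Ideal.span {fpoly})).comp
    (aeval ![X 0, 1 + X 0 * X 1 + X 2 ^ 2, X 2])

lemma hAB : ∀ a ∈ Ideal.span {fpoly}, homAB a = 0 := by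
  intro a ha
  obtain ⟨c, rfl⟩ := Ideal.mem_span_singleton.mp ha
  rw [map_mul]
  have : homAB fpoly = 0 := by
    show (Ideal.Quotient.mkₐ ℂ (Ideal.span {gpoly})) (aeval _ fpoly) = 0
    rw [Ideal.Quotient.mkₐ_eq_mk, Ideal.Quotient.eq_zero_iff_mem]
    refine Ideal.mem_span_singleton.mpr ⟨X 0 * X 1 + 1 - X 0 - X 0 * X 2 ^ 2, ?_⟩
    simp only [fpoly, gpoly, map_sub, map_mul, map_add, map_one, map_pow, aeval_X,
      Matrix.cons_val_zero, Matrix.cons_val_one, Matrix.head_cons, Matrix.cons_val_two,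
      Matrix.tail_cons]
    ring
  rw [this, zero_mul]

lemma hBA : ∀ a ∈ Ideal.span {gpoly}, homBA a = 0 := by
  intro a ha
  obtain ⟨c, rfl⟩ := Ideal.mem_span_singleton.mp ha
  rw [map_mul]
  have : homBA gpoly = 0 := by
    show (Ideal.Quotient.mkₐ ℂ (Ideal.span {fpoly})) (aeval _ gpoly) = 0
    rw [Ideal.Quotient.mkₐ_eq_mk, Ideal.Quotient.eq_zero_iff_mem]
    refine Ideal.mem_span_singleton.mpr ⟨1, ?_⟩
    simp only [fpoly, gpoly, map_sub, map_mul, map_add, map_one, map_pow, aeval_X,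
      Matrix.cons_val_zero, Matrix.cons_val_one, Matrix.head_cons, Matrix.cons_val_two,
      Matrix.tail_cons]
    ring
  rw [this, zero_mul]

def Ψ : A →ₐ[ℂ] B := Ideal.Quotient.liftₐ (Ideal.span {fpoly}) homAB hAB
def Φ : B →ₐ[ℂ] A := Ideal.Quotient.liftₐ (Ideal.span {gpoly}) homBA hBA

lemma Ψ_mk (a : R3) : Ψ (Ideal.Quotient.mk (Ideal.span {fpoly}) a) = homAB a := rfl
lemma Φ_mk (a : R3) : Φ (Ideal.Quotient.mk (Ideal.span {gpoly}) a) = homBA a := rfl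

set_option maxHeartbeats 1000000 in
set_option synthInstance.maxHeartbeats 200000 in
set_option maxHeartbeats 1000000 in
set_option synthInstance.maxHeartbeats 200000 in
theorem key : Nonempty (A ≃ₐ[ℂ] B) := by
  refine ⟨AlgEquiv.ofAlgHom Ψ Φ ?_ ?_⟩
  · apply Ideal.Quotient.algHom_ext
    apply MvPolynomial.algHom_ext
    intro i
    fin_cases i <;>
      simp only [Ψ_mk, Φ_mk, homAB, homBA, AlgHom.coe_comp, Function.comp_apply,
        Ideal.Quotient.mkₐ_eq_mk, Ideal.Quotient.liftₐ_apply, Ideal.Quotient.lift_mk,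
        aeval_X, AlgHom.id_apply, AlgHom.comp_apply, AlgHom.toRingHom_eq_coe, AlgHom.coe_toRingHom, RingHom.coe_coe, Fin.isValue, Fin.mk_zero, Fin.mk_one, Fin.reduceFinMk, Matrix.cons_val_zero, Matrix.cons_val_one, Matrix.head_cons,
        Matrix.cons_val_two, Matrix.tail_cons, map_sub, map_mul, map_add, map_one, map_pow] <;>
      first
        | rfl
        | (have h : Ideal.Quotient.mk (Ideal.span {gpoly})
                 (1 + X 0 * (X 1 ^ 2 - X 1 - X 1 * X 2 ^ 2) + X 2 ^ 2) =
               Ideal.Quotient.mk (Ideal.span {gpoly}) (X 1) :=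
             Ideal.Quotient.eq.mpr (Ideal.mem_span_singleton.mpr
               ⟨X 1 - 1 - X 2 ^ 2, by simp only [gpoly]; ring⟩)
           simpa only [map_add, map_mul, map_sub, map_one, map_pow] using h)
  · apply Ideal.Quotient.algHom_ext
    apply MvPolynomial.algHom_ext
    intro i
    fin_cases i <;>
      simp only [Ψ_mk, Φ_mk, homAB, homBA, AlgHom.coe_comp, Function.comp_apply,
        Ideal.Quotient.mkₐ_eq_mk, Ideal.Quotient.liftₐ_apply, Ideal.Quotient.lift_mk,
        aeval_X, AlgHom.id_apply, AlgHom.comp_apply, AlgHom.toRingHom_eq_coe, AlgHom.coe_toRingHom, RingHom.coe_coe, Fin.isValue, Fin.mk_zero, Fin.mk_one, Fin.reduceFinMk, Matrix.cons_val_zero, Matrix.cons_val_one, Matrix.head_cons,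
        Matrix.cons_val_two, Matrix.tail_cons, map_sub, map_mul, map_add, map_one, map_pow] <;>
      first
        | rfl
        | (have h : Ideal.Quotient.mk (Ideal.span {fpoly})
                 ((1 + X 0 * X 1 + X 2 ^ 2) ^ 2 - (1 + X 0 * X 1 + X 2 ^ 2) -
                   (1 + X 0 * X 1 + X 2 ^ 2) * X 2 ^ 2) =
               Ideal.Quotient.mk (Ideal.span {fpoly}) (X 1) :=
             Ideal.Quotient.eq.mpr (Ideal.mem_span_singleton.mpr
               ⟨X 1, by simp only [fpoly]; ring⟩)
           simpa only [map_add, map_mul, map_sub, map_one, map_pow] using h)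

/-- `ℂ[x,y,z]/⟨x(1+xy+z²) - 1⟩ ≅ ℂ[x,y,z]/⟨xy - 1⟩`.
Variables: `X 0 = x`, `X 1 = y`, `X 2 = z`. -/
theorem stmt11 :
    Nonempty
      ((MvPolynomial (Fin 3) ℂ ⧸
          Ideal.span {(X 0 * (1 + X 0 * X 1 + X 2 ^ 2) - 1 : MvPolynomial (Fin 3) ℂ)}) ≃ₐ[ℂ]
       (MvPolynomial (Fin 3) ℂ ⧸
          Ideal.span {(X 0 * X 1 - 1 : MvPolynomial (Fin 3) ℂ)})) := by
  exact key

end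
end

section
/- For any m ≥ 1, the ℂ-algebras ℂ[x,y,z₁,...,z_m]/⟨x(1+xy+z₁²+...+z_m²) - 1⟩ and ℂ[x,y,z₁,...,z_m]/⟨xy - 1⟩ are isomorphic. -/
/-! If `a` and `b` do not involve `y`, the substitution `y ↦ b + a y` carries `a y - 1` to
`a (b + a y) - 1`. Its inverse would be `y ↦ a⁻¹ (y - b)`; modulo `a y - 1` we have `a⁻¹ = y`,
which suggests `y ↦ y (y - b)`. The two substitutions are mutually inverse modulo the two ideals:
`y (y - b)` becomes `(b + a y) a y ≡ y` modulo `a (b + a y) - 1`, and `b + a y` becomes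
`b + a y (y - b) ≡ y` modulo `a y - 1`. The theorem is the case `a = x`, `b = 1 + z₁² + ⋯ + z_m²`. -/

open MvPolynomial

namespace Ideal

variable {R A B : Type*} [CommRing R] [CommRing A] [Algebra R A] [CommRing B] [Algebra R B]
  {I : Ideal A} {J : Ideal B}

noncomputable def quotientEquivAlgOfInverseMod (φ : A →ₐ[R] B) (ψ : B →ₐ[R] A)
    (hφ : I ≤ J.comap φ) (hψ : J ≤ I.comap ψ)
    (hψφ : (Quotient.mkₐ R I).comp (ψ.comp φ) = Quotient.mkₐ R I)
    (hφψ : (Quotient.mkₐ R J).comp (φ.comp ψ) = Quotient.mkₐ R J) :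
    (A ⧸ I) ≃ₐ[R] B ⧸ J :=
  AlgEquiv.ofAlgHom (quotientMapₐ J φ hφ) (quotientMapₐ I ψ hψ)
    (Quotient.algHom_ext R hφψ) (Quotient.algHom_ext R hψφ)

end Ideal

namespace MvPolynomial

variable {R σ : Type*} [CommRing R] [DecidableEq σ] (i : σ)

noncomputable def substVar (t : MvPolynomial σ R) : MvPolynomial σ R →ₐ[R] MvPolynomial σ R :=
  aeval (Function.update X i t)

variable {i}

@[simp]
theorem substVar_X_self (t : MvPolynomial σ R) : substVar i t (X i) = t := by
  simp [substVar]

@[simp]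
theorem substVar_X_of_ne {j : σ} (hj : j ≠ i) (t : MvPolynomial σ R) :
    substVar i t (X j) = X j := by
  simp [substVar, hj]

theorem substVar_of_notMem_vars {p : MvPolynomial σ R} (h : i ∉ p.vars) (t : MvPolynomial σ R) :
    substVar i t p = p := by
  conv_rhs => rw [← aeval_X_left_apply p]
  exact eval₂Hom_congr' rfl
    (fun j hj _ => Function.update_of_ne (ne_of_mem_of_not_mem hj h) _ _) rfl

theorem mkₐ_comp_substVar_comp_substVar {I : Ideal (MvPolynomial σ R)} {s t : MvPolynomial σ R}
    (h : substVar i s t - X i ∈ I) :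
    (Ideal.Quotient.mkₐ R I).comp ((substVar i s).comp (substVar i t)) =
      Ideal.Quotient.mkₐ R I := by
  refine algHom_ext fun j => ?_
  rw [AlgHom.comp_apply, AlgHom.comp_apply, Ideal.Quotient.mkₐ_eq_mk,
    Ideal.Quotient.mk_eq_mk_iff_sub_mem]
  obtain rfl | hj := eq_or_ne j i
  · rwa [substVar_X_self]
  · simp [hj]

variable {a b : MvPolynomial σ R}

noncomputable def quotientSpanMulAddEquiv (ha : i ∉ a.vars) (hb : i ∉ b.vars) :
    (MvPolynomial σ R ⧸ Ideal.span {a * (b + a * X i) - 1}) ≃ₐ[R]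
      MvPolynomial σ R ⧸ Ideal.span {a * X i - 1} :=
  have hφa := substVar_of_notMem_vars ha (X i * (X i - b))
  have hφb := substVar_of_notMem_vars hb (X i * (X i - b))
  have hψa := substVar_of_notMem_vars ha (b + a * X i)
  have hψb := substVar_of_notMem_vars hb (b + a * X i)
  Ideal.quotientEquivAlgOfInverseMod (substVar i (X i * (X i - b))) (substVar i (b + a * X i))
    (by
      rw [Ideal.span_singleton_le_iff_mem, Ideal.mem_comap, Ideal.mem_span_singleton]
      refine ⟨a * X i + 1 - a * b, ?_⟩
      simp only [map_sub, map_mul, map_add, map_one, hφa, hφb, substVar_X_self]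
      ring)
    (by
      rw [Ideal.span_singleton_le_iff_mem, Ideal.mem_comap]
      simp only [map_sub, map_mul, map_one, hψa, substVar_X_self]
      exact Ideal.mem_span_singleton_self _)
    (mkₐ_comp_substVar_comp_substVar <| Ideal.mem_span_singleton.mpr
      ⟨X i, by simp only [map_mul, map_sub, substVar_X_self, hψb]; ring⟩)
    (mkₐ_comp_substVar_comp_substVar <| Ideal.mem_span_singleton.mpr
      ⟨X i - b, by simp only [map_add, map_mul, substVar_X_self, hφa, hφb]; ring⟩)

end MvPolynomial

theorem stmt12_general {m : ℕ} :
    Nonempty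
      ((MvPolynomial (Fin (m + 2)) ℂ ⧸
          Ideal.span {(X 0 * (1 + X 0 * X 1 + ∑ i : Fin m, X i.succ.succ ^ 2) - 1 :
            MvPolynomial (Fin (m + 2)) ℂ)}) ≃ₐ[ℂ]
       (MvPolynomial (Fin (m + 2)) ℂ ⧸
          Ideal.span {(X 0 * X 1 - 1 : MvPolynomial (Fin (m + 2)) ℂ)})) := by
  set b : MvPolynomial (Fin (m + 2)) ℂ := 1 + ∑ i : Fin m, X i.succ.succ ^ 2
  have hx : (1 : Fin (m + 2)) ∉ (X 0 : MvPolynomial (Fin (m + 2)) ℂ).vars := by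
    simp [vars_X]
  have hb : (1 : Fin (m + 2)) ∉ b.vars := by
    intro h
    obtain ⟨k, -, hk⟩ := Finset.mem_biUnion.mp <| vars_sum_subset _ _ <| by
      simpa only [vars_one, Finset.empty_union] using vars_add_subset _ _ h
    have hk1 := vars_pow _ _ hk
    simp [vars_X, Fin.ext_iff] at hk1
  rw [show X 0 * (1 + X 0 * X 1 + ∑ i : Fin m, X i.succ.succ ^ 2) - 1 = X 0 * (b + X 0 * X 1) - 1
    by ring]
  exact ⟨quotientSpanMulAddEquiv hx hb⟩

/-- for `m ≥ 1`,
`ℂ[x,y,z₁,…,z_m]/⟨x(1+xy+z₁²+⋯+z_m²) - 1⟩ ≅ ℂ[x,y,z₁,…,z_m]/⟨xy - 1⟩`.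
Variables: `X 0 = x`, `X 1 = y`, `X i.succ.succ = zᵢ`. -/
theorem stmt12 {m : ℕ} (hm : 1 ≤ m) :
    Nonempty
      ((MvPolynomial (Fin (m + 2)) ℂ ⧸
          Ideal.span {(X 0 * (1 + X 0 * X 1 + ∑ i : Fin m, X i.succ.succ ^ 2) - 1 :
            MvPolynomial (Fin (m + 2)) ℂ)}) ≃ₐ[ℂ]
       (MvPolynomial (Fin (m + 2)) ℂ ⧸
          Ideal.span {(X 0 * X 1 - 1 : MvPolynomial (Fin (m + 2)) ℂ)})) :=
  stmt12_general
end

section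
/- Assume the Zariski Cancellation Conjecture (if V ⊂ ℂⁿ is a hypersurface and V × ℂ is isomorphic to ℂⁿ then V is isomorphic to ℂ^{n-1}) and the Abhyankar–Sathaye Embedding Conjecture (if the hypersurface {p = 0} in ℂⁿ is isomorphic to ℂ^{n-1} then p is a coordinate of ℂ[x₁,...,xₙ]) hold for all n. Then for all n and all k ≥ 1: if p ∈ ℂ[x₁,...,xₙ] is a coordinate of ℂ[x₁,...,x_{n+k}], then p is a coordinate of ℂ[x₁,...,xₙ]. -/
open MvPolynomial

/-- Quotient of `ℂ[x₀,…,x_M]` by a coordinate is a polynomial ring. -/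
noncomputable def coordQuot {M : ℕ} (q : MvPolynomial (Fin (M + 1)) ℂ)
    (α : MvPolynomial (Fin (M + 1)) ℂ ≃ₐ[ℂ] MvPolynomial (Fin (M + 1)) ℂ)
    (hα : α q = X 0) :
    (MvPolynomial (Fin (M + 1)) ℂ ⧸ Ideal.span {q}) ≃ₐ[ℂ] MvPolynomial (Fin M) ℂ :=
  (Ideal.quotientEquivAlg (Ideal.span {q}) (Ideal.span {X 0}) α
      (by rw [Ideal.map_span, Set.image_singleton]
          exact congrArg (fun r => Ideal.span {r}) hα.symm)).trans <|
  (Ideal.quotientEquivAlg (Ideal.span {X 0})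
      (Ideal.span {(Polynomial.X : Polynomial (MvPolynomial (Fin M) ℂ))})
      (MvPolynomial.finSuccEquiv ℂ M)
      (by rw [Ideal.map_span, Set.image_singleton]
          exact congrArg (fun r => Ideal.span {r}) (finSuccEquiv_X_zero (R := ℂ) (n := M)).symm)).trans <|
  (Ideal.quotientEquivAlgOfEq ℂ (show Ideal.span {(Polynomial.X : Polynomial (MvPolynomial (Fin M) ℂ))}
      = Ideal.span {Polynomial.X - Polynomial.C 0} by rw [map_zero, sub_zero])).trans <|
  (Polynomial.quotientSpanXSubCAlgEquiv (0 : MvPolynomial (Fin M) ℂ)).restrictScalars ℂ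

/-- Quotienting by a polynomial in the first `M` variables commutes with adding a new
last variable. -/
noncomputable def stepEquiv {M : ℕ} (q : MvPolynomial (Fin M) ℂ) :
    (MvPolynomial (Fin (M + 1)) ℂ ⧸ Ideal.span {rename Fin.castSucc q}) ≃ₐ[ℂ]
      Polynomial (MvPolynomial (Fin M) ℂ ⧸ Ideal.span {q}) := by
  have hE : ((MvPolynomial.optionEquivLeft ℂ (Fin M)).toAlgHom.comp
      ((renameEquiv ℂ finSuccEquivLast).toAlgHom.comp (rename (R := ℂ) Fin.castSucc))) q
      = Polynomial.C q := by
    have : ((MvPolynomial.optionEquivLeft ℂ (Fin M)).toAlgHom.comp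
        ((renameEquiv ℂ finSuccEquivLast).toAlgHom.comp (rename (R := ℂ) Fin.castSucc)))
        = ((Polynomial.CAlgHom (R := ℂ) (A := MvPolynomial (Fin M) ℂ)).comp (AlgHom.id ℂ (MvPolynomial (Fin M) ℂ))) := by
      apply MvPolynomial.algHom_ext
      intro i
      simp [renameEquiv_apply, rename_rename, Function.comp,
        MvPolynomial.optionEquivLeft_X_some, Polynomial.CAlgHom]
    rw [this]; rfl
  refine (Ideal.quotientEquivAlg (Ideal.span {rename Fin.castSucc q})
      (Ideal.span {(Polynomial.C q : Polynomial (MvPolynomial (Fin M) ℂ))})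
      ((renameEquiv ℂ finSuccEquivLast).trans (MvPolynomial.optionEquivLeft ℂ (Fin M)))
      (by rw [Ideal.map_span, Set.image_singleton]
          exact congrArg (fun r => Ideal.span {r}) hE.symm)).trans ?_
  refine (Ideal.quotientEquivAlgOfEq ℂ (show Ideal.span {(Polynomial.C q : Polynomial (MvPolynomial (Fin M) ℂ))}
      = (Ideal.span {q}).map Polynomial.C by rw [Ideal.map_span, Set.image_singleton])).trans ?_
  exact AlgEquiv.ofRingEquiv (f := (Ideal.polynomialQuotientEquivQuotientPolynomial (Ideal.span {q})).symm)
    (by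
      intro x
      have h1 : (@algebraMap ℂ (Polynomial (MvPolynomial (Fin M) ℂ) ⧸ (Ideal.span {q}).map (Polynomial.C (R := MvPolynomial (Fin M) ℂ))) _ inferInstance inferInstance) x
          = Ideal.Quotient.mk _ (Polynomial.C (algebraMap ℂ (MvPolynomial (Fin M) ℂ) x)) := by
        rw [← Polynomial.algebraMap_apply, Ideal.Quotient.mk_algebraMap]
      rw [h1, Ideal.polynomialQuotientEquivQuotientPolynomial_symm_mk, Polynomial.map_C]
      rfl)

/-- the Zariski Cancellation conjecture together with the
Abhyankar–Sathaye Embedding conjecture imply: if `p ∈ ℂ[x₁,…,xₙ]` is a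
coordinate of `ℂ[x₁,…,x_{n+k}]`, then `p` is a coordinate of `ℂ[x₁,…,xₙ]`. -/
theorem stmt16
    (ZC : ∀ (N : ℕ) (p : MvPolynomial (Fin N) ℂ),
      Nonempty ((Polynomial (MvPolynomial (Fin N) ℂ ⧸ Ideal.span {p})) ≃ₐ[ℂ]
        MvPolynomial (Fin N) ℂ) →
      Nonempty ((MvPolynomial (Fin N) ℂ ⧸ Ideal.span {p}) ≃ₐ[ℂ]
        MvPolynomial (Fin (N - 1)) ℂ))
    (AS : ∀ (N : ℕ) (hN : 0 < N) (p : MvPolynomial (Fin N) ℂ),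
      Nonempty ((MvPolynomial (Fin N) ℂ ⧸ Ideal.span {p}) ≃ₐ[ℂ]
        MvPolynomial (Fin (N - 1)) ℂ) →
      ∃ α : MvPolynomial (Fin N) ℂ ≃ₐ[ℂ] MvPolynomial (Fin N) ℂ, α p = X ⟨0, hN⟩)
    (n k : ℕ) (hn : 0 < n) (hk : 1 ≤ k) (p : MvPolynomial (Fin n) ℂ)
    (h : ∃ φ : MvPolynomial (Fin (n + k)) ℂ ≃ₐ[ℂ] MvPolynomial (Fin (n + k)) ℂ,
      φ (rename (Fin.castAdd k) p) = X ⟨0, by omega⟩) :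
    ∃ α : MvPolynomial (Fin n) ℂ ≃ₐ[ℂ] MvPolynomial (Fin n) ℂ, α p = X ⟨0, hn⟩ := by
  -- decomposition of the embedding `castAdd`
  have hcast : ∀ (j : ℕ), rename (Fin.castAdd (j + 1)) p
      = rename (Fin.castSucc : Fin (n + j) → Fin (n + j + 1)) (rename (Fin.castAdd j) p) := by
    intro j
    have hfun : (Fin.castSucc ∘ Fin.castAdd j : Fin n → Fin (n + j + 1))
        = Fin.castAdd (j + 1) := funext fun i => Fin.ext rfl
    rw [rename_rename, hfun]
  have key : ∀ (m : ℕ),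
      Nonempty ((MvPolynomial (Fin (n + m + 1)) ℂ ⧸
          Ideal.span {rename (Fin.castAdd (m + 1)) p}) ≃ₐ[ℂ] MvPolynomial (Fin (n + m)) ℂ) →
      Nonempty ((MvPolynomial (Fin n) ℂ ⧸ Ideal.span {p}) ≃ₐ[ℂ]
        MvPolynomial (Fin (n - 1)) ℂ) := by
    intro m
    induction m with
    | zero =>
      intro hyp
      rw [hcast 0] at hyp
      have hp0 : rename (Fin.castAdd 0) p = p := by
        rw [show (Fin.castAdd 0 : Fin n → Fin (n + 0)) = id from funext fun i => Fin.ext rfl]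
        exact rename_id_apply p
      rw [hp0] at hyp
      obtain ⟨e⟩ := hyp
      exact ZC n p ⟨(stepEquiv p).symm.trans e⟩
    | succ j ih =>
      intro hyp
      apply ih
      rw [hcast (j + 1)] at hyp
      obtain ⟨e⟩ := hyp
      exact ZC (n + j + 1) (rename (Fin.castAdd (j + 1)) p)
        ⟨(stepEquiv (rename (Fin.castAdd (j + 1)) p)).symm.trans e⟩
  obtain ⟨m, rfl⟩ : ∃ m, k = m + 1 := ⟨k - 1, by omega⟩
  obtain ⟨φ, hφ⟩ := h
  have hφ' : φ (rename (Fin.castAdd (m + 1)) p) = X (0 : Fin (n + m + 1)) := by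
    rw [hφ]; congr 1
  exact AS n hn p (key m ⟨coordQuot _ φ hφ'⟩)
end

section
/- For any r ≥ 0 and m ≥ 1, the ℂ-algebras ℂ[x,y,z₁,...,z_m,t₁,...,t_r]/⟨x·t₁···t_r·(1+xy+z₁²+...+z_m²) - 1⟩ and ℂ[x,y,t₁,...,t_r,w₁,...,w_m]/⟨x·y·t₁···t_r - 1⟩ are isomorphic. -/
open MvPolynomial

noncomputable section Stmt19Aux

variable (m r : ℕ)

/-- generator of the first ideal -/
def s19p1 : MvPolynomial (Fin 2 ⊕ Fin m ⊕ Fin r) ℂ :=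
  X (Sum.inl 0) * (∏ j : Fin r, X (Sum.inr (Sum.inr j))) *
    (1 + X (Sum.inl 0) * X (Sum.inl 1) + ∑ i : Fin m, X (Sum.inr (Sum.inl i)) ^ 2) - 1

/-- generator of the second ideal -/
def s19p2 : MvPolynomial (Fin 2 ⊕ Fin r ⊕ Fin m) ℂ :=
  X (Sum.inl 0) * X (Sum.inl 1) * (∏ j : Fin r, X (Sum.inr (Sum.inl j))) - 1

/-- assignment realizing the map from ring 1 to ring 2 -/
def s19w1 : (Fin 2 ⊕ Fin m ⊕ Fin r) → MvPolynomial (Fin 2 ⊕ Fin r ⊕ Fin m) ℂ :=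
  Sum.elim
    ![X (Sum.inl 0),
      X (Sum.inl 1) * (∏ j : Fin r, X (Sum.inr (Sum.inl j))) *
        (X (Sum.inl 1) - 1 - ∑ i : Fin m, X (Sum.inr (Sum.inr i)) ^ 2)]
    (Sum.elim (fun i => X (Sum.inr (Sum.inr i))) (fun j => X (Sum.inr (Sum.inl j))))

/-- assignment realizing the map from ring 2 to ring 1 -/
def s19w2 : (Fin 2 ⊕ Fin r ⊕ Fin m) → MvPolynomial (Fin 2 ⊕ Fin m ⊕ Fin r) ℂ :=
  Sum.elim
    ![X (Sum.inl 0),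
      1 + X (Sum.inl 0) * X (Sum.inl 1) + ∑ i : Fin m, X (Sum.inr (Sum.inl i)) ^ 2]
    (Sum.elim (fun j => X (Sum.inr (Sum.inr j))) (fun i => X (Sum.inr (Sum.inl i))))

lemma s19key1 : aeval (s19w1 m r) (s19p1 m r) =
    s19p2 m r * (1 + X (Sum.inl 0) * (∏ j : Fin r, X (Sum.inr (Sum.inl j))) *
      (X (Sum.inl 1) - 1 - ∑ i : Fin m, X (Sum.inr (Sum.inr i)) ^ 2)) := by
  simp [s19p1, s19p2, s19w1, map_sub, map_mul, map_add, map_one, map_prod, map_sum]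
  ring

lemma s19key2 : aeval (s19w2 m r) (s19p2 m r) = s19p1 m r := by
  simp [s19p1, s19p2, s19w2, map_sub, map_mul, map_add, map_one, map_prod, map_sum]
  ring

lemma s19key3 : aeval (s19w2 m r) (s19w1 m r (Sum.inl 1)) - X (Sum.inl 1) =
    s19p1 m r * X (Sum.inl 1) := by
  simp [s19p1, s19w1, s19w2, map_sub, map_mul, map_add, map_one, map_prod, map_sum]
  ring

lemma s19key4 : aeval (s19w1 m r) (s19w2 m r (Sum.inl 1)) - X (Sum.inl 1) =
    s19p2 m r * (X (Sum.inl 1) - 1 - ∑ i : Fin m, X (Sum.inr (Sum.inr i)) ^ 2) := by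
  simp [s19p2, s19w1, s19w2, map_sub, map_mul, map_add, map_one, map_prod, map_sum]
  ring

end Stmt19Aux
section Stmt19Main

variable (m r : ℕ)

noncomputable abbrev s19I1 : Ideal (MvPolynomial (Fin 2 ⊕ Fin m ⊕ Fin r) ℂ) := Ideal.span {s19p1 m r}
noncomputable abbrev s19I2 : Ideal (MvPolynomial (Fin 2 ⊕ Fin r ⊕ Fin m) ℂ) := Ideal.span {s19p2 m r}

noncomputable def s19F : (MvPolynomial (Fin 2 ⊕ Fin m ⊕ Fin r) ℂ ⧸ s19I1 m r) →ₐ[ℂ]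
    (MvPolynomial (Fin 2 ⊕ Fin r ⊕ Fin m) ℂ ⧸ s19I2 m r) :=
  Ideal.Quotient.liftₐ _ ((Ideal.Quotient.mkₐ ℂ (s19I2 m r)).comp (aeval (s19w1 m r))) (by
    intro a ha
    rw [Ideal.mem_span_singleton] at ha
    obtain ⟨c, rfl⟩ := ha
    simp only [AlgHom.comp_apply, map_mul, s19key1]
    have : Ideal.Quotient.mkₐ ℂ (s19I2 m r) (s19p2 m r) = 0 := by
      rw [Ideal.Quotient.mkₐ_eq_mk, Ideal.Quotient.eq_zero_iff_mem]
      exact Ideal.subset_span rfl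
    rw [this, zero_mul, zero_mul])

noncomputable def s19G : (MvPolynomial (Fin 2 ⊕ Fin r ⊕ Fin m) ℂ ⧸ s19I2 m r) →ₐ[ℂ]
    (MvPolynomial (Fin 2 ⊕ Fin m ⊕ Fin r) ℂ ⧸ s19I1 m r) :=
  Ideal.Quotient.liftₐ _ ((Ideal.Quotient.mkₐ ℂ (s19I1 m r)).comp (aeval (s19w2 m r))) (by
    intro a ha
    rw [Ideal.mem_span_singleton] at ha
    obtain ⟨c, rfl⟩ := ha
    simp only [AlgHom.comp_apply, map_mul, s19key2]
    have : Ideal.Quotient.mkₐ ℂ (s19I1 m r) (s19p1 m r) = 0 := by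
      rw [Ideal.Quotient.mkₐ_eq_mk, Ideal.Quotient.eq_zero_iff_mem]
      exact Ideal.subset_span rfl
    rw [this, zero_mul])

lemma s19GF : (s19G m r).comp (s19F m r) = AlgHom.id ℂ _ := by
  apply Ideal.Quotient.algHom_ext
  apply MvPolynomial.algHom_ext
  intro i
  simp only [AlgHom.comp_apply, Ideal.Quotient.mkₐ_eq_mk, AlgHom.id_apply]
  erw [s19F, Ideal.Quotient.liftₐ_apply, Ideal.Quotient.lift_mk]
  simp only [AlgHom.toRingHom_eq_coe, RingHom.coe_coe, AlgHom.coe_comp, Function.comp_apply,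
    aeval_X, Ideal.Quotient.mkₐ_eq_mk]
  rw [Ideal.Quotient.eq]
  rw [Ideal.mem_span_singleton]
  match i with
  | Sum.inl 0 => exact ⟨0, by simp [s19w1, s19w2]⟩
  | Sum.inl 1 => exact ⟨X (Sum.inl 1), s19key3 m r⟩
  | Sum.inr (Sum.inl i) => exact ⟨0, by simp [s19w1, s19w2]⟩
  | Sum.inr (Sum.inr j) => exact ⟨0, by simp [s19w1, s19w2]⟩

lemma s19FG : (s19F m r).comp (s19G m r) = AlgHom.id ℂ _ := by
  apply Ideal.Quotient.algHom_ext
  apply MvPolynomial.algHom_ext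
  intro i
  simp only [AlgHom.comp_apply, Ideal.Quotient.mkₐ_eq_mk, AlgHom.id_apply]
  erw [s19G, Ideal.Quotient.liftₐ_apply, Ideal.Quotient.lift_mk]
  simp only [AlgHom.toRingHom_eq_coe, RingHom.coe_coe, AlgHom.coe_comp, Function.comp_apply,
    aeval_X, Ideal.Quotient.mkₐ_eq_mk]
  rw [Ideal.Quotient.eq]
  rw [Ideal.mem_span_singleton]
  match i with
  | Sum.inl 0 => exact ⟨0, by simp [s19w1, s19w2]⟩
  | Sum.inl 1 =>
      exact ⟨X (Sum.inl 1) - 1 - ∑ i : Fin m, X (Sum.inr (Sum.inr i)) ^ 2, s19key4 m r⟩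
  | Sum.inr (Sum.inl j) => exact ⟨0, by simp [s19w1, s19w2]⟩
  | Sum.inr (Sum.inr i) => exact ⟨0, by simp [s19w1, s19w2]⟩

end Stmt19Main

/-- for `r ≥ 0`, `m ≥ 1`,
`ℂ[x,y,z₁,…,z_m,t₁,…,t_r]/⟨x·t₁⋯t_r·(1+xy+z₁²+⋯+z_m²) - 1⟩` is isomorphic to
`ℂ[x,y,t₁,…,t_r,w₁,…,w_m]/⟨x·y·t₁⋯t_r - 1⟩`. In the first ring the variables are
indexed by `Fin 2 ⊕ Fin m ⊕ Fin r` (`x = inl 0`, `y = inl 1`, `zᵢ = inr (inl i)`,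
`tⱼ = inr (inr j)`); in the second by `Fin 2 ⊕ Fin r ⊕ Fin m`
(`x = inl 0`, `y = inl 1`, `tⱼ = inr (inl j)`, `wᵢ = inr (inr i)`). -/
theorem stmt19 {m r : ℕ} (hm : 1 ≤ m) :
    Nonempty
      ((MvPolynomial (Fin 2 ⊕ Fin m ⊕ Fin r) ℂ ⧸
          Ideal.span {(X (Sum.inl 0) * (∏ j : Fin r, X (Sum.inr (Sum.inr j))) *
            (1 + X (Sum.inl 0) * X (Sum.inl 1) +
              ∑ i : Fin m, X (Sum.inr (Sum.inl i)) ^ 2) - 1 :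
            MvPolynomial (Fin 2 ⊕ Fin m ⊕ Fin r) ℂ)}) ≃ₐ[ℂ]
       (MvPolynomial (Fin 2 ⊕ Fin r ⊕ Fin m) ℂ ⧸
          Ideal.span {(X (Sum.inl 0) * X (Sum.inl 1) *
            (∏ j : Fin r, X (Sum.inr (Sum.inl j))) - 1 :
            MvPolynomial (Fin 2 ⊕ Fin r ⊕ Fin m) ℂ)})) := by
  exact ⟨AlgEquiv.ofAlgHom (s19F m r) (s19G m r) (s19FG m r) (s19GF m r)⟩
end
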